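/- Let X be a topological space and x ∈ X. Then each of the following implies the next: (a) player I has a winning strategy in the selection game G1(D_X, Ω_{X,x}); (b) player II has a winning strategy in the closure game CL(X,x); (c) player II has a winning strategy in Gruenhage's clustering game at x; (d) player I has a winning strategy in the selection game G1(Ω_{X,x}, Ω_{X,x}). -/

import Mathlib

open Set Filter Topology

/-- The list `[a 0, …, a (n-1)]` of the first `n` moves of a play `a`. -/
def hist {α : Type*} (a : ℕ → α) (n : ℕ) : List α :=
  List.ofFn fun i : Fin n => a i

section SelectionGames

variable {M : Type*}

/-- The selection principle `S1(A,B)`. -/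
def S1 (A B : Set (Set M)) : Prop :=
  ∀ a : ℕ → Set M, (∀ n, a n ∈ A) →
    ∃ b : ℕ → M, (∀ n, b n ∈ a n) ∧ Set.range b ∈ B

/-- The selection principle `Sfin(A,B)`. -/
def Sfin (A B : Set (Set M)) : Prop :=
  ∀ a : ℕ → Set M, (∀ n, a n ∈ A) →
    ∃ b : ℕ → Set M, (∀ n, b n ⊆ a n ∧ (b n).Finite) ∧ (⋃ n, b n) ∈ B

/-- Player I has a winning predetermined strategy in the selection game `G1(A,B)`:
a sequence of moves `σ n ∈ A`, depending only on the round number, such that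
no legal sequence of responses by II produces a member of `B`. -/
def IPredetWinsG1 (A B : Set (Set M)) : Prop :=
  ∃ σ : ℕ → Set M, (∀ n, σ n ∈ A) ∧
    ∀ b : ℕ → M, (∀ n, b n ∈ σ n) → Set.range b ∉ B

/-- Player I has a winning predetermined strategy in the selection game `Gfin(A,B)`. -/
def IPredetWinsGfin (A B : Set (Set M)) : Prop :=
  ∃ σ : ℕ → Set M, (∀ n, σ n ∈ A) ∧
    ∀ b : ℕ → Set M, (∀ n, b n ⊆ σ n ∧ (b n).Finite) → (⋃ n, b n) ∉ B

/-- Player I has a winning (perfect-information) strategy in `G1(A,B)`: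
I's move in round `n` depends on II's previous moves `b 0, …, b (n-1)`. -/
def IWinsG1 (A B : Set (Set M)) : Prop :=
  ∃ σ : List M → Set M, (∀ h, σ h ∈ A) ∧
    ∀ b : ℕ → M, (∀ n, b n ∈ σ (hist b n)) → Set.range b ∉ B

/-- Player II has a winning (perfect-information) strategy in `G1(A,B)`:
II's move in round `n` depends on I's previous moves `a 0, …, a (n-1)`
together with I's current move `a n`; it is legal and always produces a member of `B`. -/
def IIWinsG1 (A B : Set (Set M)) : Prop :=
  ∃ σ : List (Set M) → Set M → M,
    ∀ a : ℕ → Set M, (∀ n, a n ∈ A) →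
      (∀ n, σ (hist a n) (a n) ∈ a n) ∧
      Set.range (fun n => σ (hist a n) (a n)) ∈ B

/-- Player II has a winning Markov strategy in `G1(A,B)`: II's move depends only on
I's current move and the round number. -/
def IIMarkovWinsG1 (A B : Set (Set M)) : Prop :=
  ∃ σ : Set M → ℕ → M,
    ∀ a : ℕ → Set M, (∀ n, a n ∈ A) →
      (∀ n, σ (a n) n ∈ a n) ∧
      Set.range (fun n => σ (a n) n) ∈ B

end SelectionGames

section TopologicalGames

variable {X : Type*}

/-- `𝒰` is an open cover of the space `X`. -/
def IsOpenCover [TopologicalSpace X] (𝒰 : Set (Set X)) : Prop :=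
  (∀ U ∈ 𝒰, IsOpen U) ∧ ⋃₀ 𝒰 = Set.univ

/-- `𝒰` is an ω-cover of `X`: an open cover such that every finite subset of `X`
is contained in a single member of `𝒰`. -/
def IsOmegaCover [TopologicalSpace X] (𝒰 : Set (Set X)) : Prop :=
  IsOpenCover 𝒰 ∧ ∀ F : Finset X, ∃ U ∈ 𝒰, ↑F ⊆ U

/-- `D` is a closed discrete subset of the space. -/
def IsClosedDiscrete [TopologicalSpace X] (D : Set X) : Prop :=
  IsClosed D ∧ ∀ x ∈ D, ∃ U : Set X, IsOpen U ∧ U ∩ D = {x}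

/-- Player I has a winning predetermined strategy in the point-open game `PO(X)`. -/
def IPredetWinsPO (X : Type*) [TopologicalSpace X] : Prop :=
  ∃ p : ℕ → X, ∀ U : ℕ → Set X,
    (∀ n, IsOpen (U n) ∧ p n ∈ U n) → (⋃ n, U n) = Set.univ

/-- Player II has a winning Markov strategy in the point-open game `PO(X)`. -/
def IIMarkovWinsPO (X : Type*) [TopologicalSpace X] : Prop :=
  ∃ σ : X → ℕ → Set X,
    (∀ x n, IsOpen (σ x n) ∧ x ∈ σ x n) ∧
    ∀ p : ℕ → X, (⋃ n, σ (p n) n) ≠ Set.univ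

/-- Player I has a winning predetermined strategy in the finite-open game `FO(X)`. -/
def IPredetWinsFO (X : Type*) [TopologicalSpace X] : Prop :=
  ∃ p : ℕ → Finset X, ∀ U : ℕ → Set X,
    (∀ n, IsOpen (U n) ∧ ↑(p n) ⊆ U n) → (⋃ n, U n) = Set.univ

/-- Player II has a winning Markov strategy in the finite-open game `FO(X)`. -/
def IIMarkovWinsFO (X : Type*) [TopologicalSpace X] : Prop :=
  ∃ σ : Finset X → ℕ → Set X,
    (∀ F n, IsOpen (σ F n) ∧ ↑F ⊆ σ F n) ∧
    ∀ F : ℕ → Finset X, (⋃ n, σ (F n) n) ≠ Set.univ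

/-- Player I has a winning predetermined strategy in the game `ΩFO(X)`. -/
def IPredetWinsOmegaFO (X : Type*) [TopologicalSpace X] : Prop :=
  ∃ p : ℕ → Finset X, ∀ U : ℕ → Set X,
    (∀ n, IsOpen (U n) ∧ ↑(p n) ⊆ U n) → IsOmegaCover (Set.range U)

/-- Player I has a winning (perfect-information) strategy in the game `ΩFO(X)`:
I's move in round `n` depends on II's previous moves `U 0, …, U (n-1)`. -/
def IWinsOmegaFO (X : Type*) [TopologicalSpace X] : Prop :=
  ∃ σ : List (Set X) → Finset X, ∀ U : ℕ → Set X,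
    (∀ n, IsOpen (U n) ∧ ↑(σ (hist U n)) ⊆ U n) → IsOmegaCover (Set.range U)

/-- Player II has a winning (perfect-information) strategy in the game `ΩFO(X)`:
II's move in round `n` depends on I's previous moves together with I's current move. -/
def IIWinsOmegaFO (X : Type*) [TopologicalSpace X] : Prop :=
  ∃ σ : List (Finset X) → Finset X → Set X,
    (∀ h F, IsOpen (σ h F) ∧ ↑F ⊆ σ h F) ∧
    ∀ F : ℕ → Finset X, ¬ IsOmegaCover (Set.range fun n => σ (hist F n) (F n))

/-- Player II has a winning Markov strategy in the game `ΩFO(X)`. -/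
def IIMarkovWinsOmegaFO (X : Type*) [TopologicalSpace X] : Prop :=
  ∃ σ : Finset X → ℕ → Set X,
    (∀ F n, IsOpen (σ F n) ∧ ↑F ⊆ σ F n) ∧
    ∀ F : ℕ → Finset X, ¬ IsOmegaCover (Set.range fun n => σ (F n) n)

/-- Player II has a winning tactic in the game `ΩPO(X)`: II's move depends only on
I's current move. -/
def IITacticWinsOmegaPO (X : Type*) [TopologicalSpace X] : Prop :=
  ∃ σ : X → Set X,
    (∀ x, IsOpen (σ x) ∧ x ∈ σ x) ∧
    ∀ p : ℕ → X, ¬ IsOmegaCover (Set.range fun n => σ (p n))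

/-- Player I has a winning (perfect-information) strategy in the discrete
selection game `CD(Y)`. -/
def IWinsCD (Y : Type*) [TopologicalSpace Y] : Prop :=
  ∃ σ : List Y → Set Y,
    (∀ h, IsOpen (σ h) ∧ (σ h).Nonempty) ∧
    ∀ y : ℕ → Y, (∀ n, y n ∈ σ (hist y n)) → ¬ IsClosedDiscrete (Set.range y)

/-- Player I has a winning predetermined strategy in the discrete selection game `CD(Y)`. -/
def IPredetWinsCD (Y : Type*) [TopologicalSpace Y] : Prop :=
  ∃ U : ℕ → Set Y, (∀ n, IsOpen (U n) ∧ (U n).Nonempty) ∧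
    ∀ y : ℕ → Y, (∀ n, y n ∈ U n) → ¬ IsClosedDiscrete (Set.range y)

/-- Player II has a winning (perfect-information) strategy in the discrete
selection game `CD(Y)`. -/
def IIWinsCD (Y : Type*) [TopologicalSpace Y] : Prop :=
  ∃ σ : List (Set Y) → Set Y → Y,
    ∀ U : ℕ → Set Y, (∀ n, IsOpen (U n) ∧ (U n).Nonempty) →
      (∀ n, σ (hist U n) (U n) ∈ U n) ∧
      IsClosedDiscrete (Set.range fun n => σ (hist U n) (U n))

/-- Player II has a winning Markov strategy in the discrete selection game `CD(Y)`. -/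
def IIMarkovWinsCD (Y : Type*) [TopologicalSpace Y] : Prop :=
  ∃ σ : Set Y → ℕ → Y,
    ∀ U : ℕ → Set Y, (∀ n, IsOpen (U n) ∧ (U n).Nonempty) →
      (∀ n, σ (U n) n ∈ U n) ∧
      IsClosedDiscrete (Set.range fun n => σ (U n) n)

/-- Player II has a winning (perfect-information) strategy in the closure game `CL(Y,x)`. -/
def IIWinsCL (Y : Type*) [TopologicalSpace Y] (x : Y) : Prop :=
  ∃ σ : List (Set Y) → Set Y → Y,
    ∀ U : ℕ → Set Y, (∀ n, IsOpen (U n) ∧ (U n).Nonempty) →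
      (∀ n, σ (hist U n) (U n) ∈ U n) ∧
      x ∉ closure (Set.range fun n => σ (hist U n) (U n))

/-- Player II has a winning Markov strategy in the closure game `CL(Y,x)`. -/
def IIMarkovWinsCL (Y : Type*) [TopologicalSpace Y] (x : Y) : Prop :=
  ∃ σ : Set Y → ℕ → Y,
    ∀ U : ℕ → Set Y, (∀ n, IsOpen (U n) ∧ (U n).Nonempty) →
      (∀ n, σ (U n) n ∈ U n) ∧
      x ∉ closure (Set.range fun n => σ (U n) n)

/-- Player II has a winning (perfect-information) strategy in Gruenhage's
clustering game at `x`. -/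
def IIWinsGruCluster (Y : Type*) [TopologicalSpace Y] (x : Y) : Prop :=
  ∃ σ : List (Set Y) → Set Y → Y,
    ∀ U : ℕ → Set Y, (∀ n, IsOpen (U n) ∧ x ∈ U n) →
      (∀ n, σ (hist U n) (U n) ∈ U n) ∧
      ¬ MapClusterPt x atTop (fun n => σ (hist U n) (U n))

/-- Player II has a winning Markov strategy in Gruenhage's clustering game at `x`. -/
def IIMarkovWinsGruCluster (Y : Type*) [TopologicalSpace Y] (x : Y) : Prop :=
  ∃ σ : Set Y → ℕ → Y,
    ∀ U : ℕ → Set Y, (∀ n, IsOpen (U n) ∧ x ∈ U n) →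
      (∀ n, σ (U n) n ∈ U n) ∧
      ¬ MapClusterPt x atTop (fun n => σ (U n) n)

/-- Player I has a winning predetermined strategy in Gruenhage's clustering game at `x`. -/
def IPredetWinsGruCluster (Y : Type*) [TopologicalSpace Y] (x : Y) : Prop :=
  ∃ U : ℕ → Set Y, (∀ n, IsOpen (U n) ∧ x ∈ U n) ∧
    ∀ y : ℕ → Y, (∀ n, y n ∈ U n) → MapClusterPt x atTop y

/-- Player I has a winning predetermined strategy in Gruenhage's W-game at `x`
(I wins when II's points converge to `x`). -/
def IPredetWinsGruW (Y : Type*) [TopologicalSpace Y] (x : Y) : Prop :=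
  ∃ U : ℕ → Set Y, (∀ n, IsOpen (U n) ∧ x ∈ U n) ∧
    ∀ y : ℕ → Y, (∀ n, y n ∈ U n) → Filter.Tendsto y atTop (𝓝 x)

end TopologicalGames

/-- `Cp X`: the continuous real-valued functions on `X` with the topology of
pointwise convergence (inherited from the product topology on `X → ℝ`). -/
def Cp (X : Type*) [TopologicalSpace X] : Type _ := {f : X → ℝ // Continuous f}

instance (X : Type*) [TopologicalSpace X] : TopologicalSpace (Cp X) :=
  inferInstanceAs (TopologicalSpace {f : X → ℝ // Continuous f})

/-- The constant zero function, as an element of `Cp X`. -/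
def Cp.zero (X : Type*) [TopologicalSpace X] : Cp X := ⟨fun _ => 0, continuous_const⟩

/-!
(a) ⇒ (b): if `s` is I's winning strategy in `G1(D_X, Ω_{X,x})`, II answers I's open set `U_n`
in the closure game by a point of `U_n ∩ s(b_0, …, b_{n-1})`, nonempty since `s` plays dense
sets. The points `b_n` are then a play against `s`, so `x ∉ cl {b_n : n ∈ ω}`.

(b) ⇒ (c): the clustering game is the closure game with fewer moves for I, and a cluster point
of `(x_n)` lies in `cl {x_n : n ∈ ω}`.

(c) ⇒ (d): let `σ` be II's winning strategy in the clustering game. After a finite play `t`,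
if I repeats a neighbourhood `V` of `x` forever, `σ`'s answers cannot all have `x` in their
closure (they would cluster at `x`), so some repetition `t, V, …, V` yields an answer `p ∈ V`
with `x ∉ cl {p}`. I's move in `G1(Ω_{X,x}, Ω_{X,x})` is the set of these answers over all `V`;
it has `x` in its closure. Each point `b_n` chosen by II is such an answer, so all of them
occur along a single play against `σ`: they do not cluster at `x`, and no single `b_n` has
`x` in its closure, hence `x ∉ cl {b_n : n ∈ ω}`.
-/

section Histories

variable {α β : Type*}

@[simp]
lemma length_hist (a : ℕ → α) (n : ℕ) : (hist a n).length = n := by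
  simp [hist]

lemma hist_succ (a : ℕ → α) (n : ℕ) : hist a (n + 1) = hist a n ++ [a n] := by
  simp only [hist, List.ofFn_succ', List.concat_eq_append, Fin.val_castSucc, Fin.val_last]

lemma hist_succ_eq_append_singleton_iff {a : ℕ → α} {n : ℕ} {l : List α} {v : α} :
    hist a (n + 1) = l ++ [v] ↔ hist a n = l ∧ a n = v := by
  rw [hist_succ]
  constructor
  · intro h
    obtain ⟨hl, hv⟩ := List.append_inj' h rfl
    exact ⟨hl, List.singleton_inj.1 hv⟩
  · rintro ⟨rfl, rfl⟩
    rfl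

lemma apply_mem_of_hist_eq {a : ℕ → α} {n : ℕ} {l : List α} (h : hist a n = l) {m : ℕ}
    (hm : m < n) : a m ∈ l := by
  subst h
  exact List.mem_ofFn.2 ⟨⟨m, hm⟩, rfl⟩

lemma hist_getD_length_add (l : List α) (d : α) (k : ℕ) :
    hist (fun m => l.getD m d) (l.length + k) = l ++ List.replicate k d := by
  induction k with
  | zero =>
    refine List.ext_getElem (by simp) fun i hi _ => ?_
    simp [hist]
  | succ k ih =>
    rw [← add_assoc, hist_succ, ih, List.replicate_succ', List.append_assoc,
      List.getD_eq_default l d (by omega)]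

/-- The moves of a player who answers each move `b` of the opponent by `f h b`, where `h` lists
the player's own earlier moves. -/
def replay (f : List α → β → α) (l : List β) : List α :=
  l.foldl (fun acc b => acc ++ [f acc b]) []

lemma replay_hist (f : List α → β → α) (U : ℕ → β) (n : ℕ) :
    replay f (hist U n) = hist (fun k => f (replay f (hist U k)) (U k)) n := by
  induction n with
  | zero => rfl
  | succ n ih =>
    rw [hist_succ, hist_succ, ← ih]
    exact List.foldl_concat _ _ _ _

lemma prefix_of_le_of_prefix_succ {t : ℕ → List α} (ht : ∀ n, t n <+: t (n + 1)) {m n : ℕ}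
    (hmn : m ≤ n) : t m <+: t n := by
  induction n, hmn using Nat.le_induction with
  | base => exact List.prefix_refl _
  | succ n _ ih => exact ih.trans (ht n)

lemma exists_hist_eq_of_prefix {t : ℕ → List α} (ht : ∀ n, t n <+: t (n + 1))
    (hlen : ∀ n, n ≤ (t n).length) : ∃ W : ℕ → α, ∀ n, hist W (t n).length = t n := by
  refine ⟨fun m => (t (m + 1))[m]'(hlen (m + 1)), fun n => ?_⟩
  refine List.ext_getElem (by simp) fun i _ hi => ?_
  simp only [hist, List.getElem_ofFn]
  exact ((prefix_of_le_of_prefix_succ ht (le_max_left (i + 1) n)).getElem _).trans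
    ((prefix_of_le_of_prefix_succ ht (le_max_right (i + 1) n)).getElem hi).symm

end Histories

section ClusterPoints

variable {X : Type*} [TopologicalSpace X] {x : X}

lemma mapClusterPt_of_eventually_specializes {ι : Type*} {F : Filter ι} [F.NeBot] {u : ι → X}
    (h : ∀ᶠ i in F, u i ⤳ x) : MapClusterPt x F u :=
  Tendsto.mapClusterPt fun _ hs => h.mono fun _ hi => mem_of_mem_nhds (hi hs)

lemma mapClusterPt_of_mem_closure_range {u : ℕ → X} (hx : x ∈ closure (range u))
    (hu : ∀ n, ¬ u n ⤳ x) : MapClusterPt x atTop u := by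
  rw [mapClusterPt_atTop_iff_forall_mem_closure]
  intro N
  rw [← image_univ, ← Iio_union_Ici (a := N), image_union, closure_union] at hx
  refine hx.resolve_left fun hxN => ?_
  rw [image_eq_iUnion, (finite_Iio N).closure_biUnion, mem_iUnion₂] at hxN
  obtain ⟨n, -, hn⟩ := hxN
  exact hu n (specializes_iff_mem_closure.2 hn)

end ClusterPoints

section ClosureGame

variable {X : Type*} [TopologicalSpace X] {x : X}

theorem iiWinsCL_of_iWinsG1_dense
    (h : IWinsG1 {D : Set X | Dense D} {A : Set X | x ∈ closure A}) : IIWinsCL X x := by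
  obtain ⟨s, hs_dense, hs_win⟩ := h
  have : Nonempty X := ⟨x⟩
  let f : List X → Set X → X := fun acc U => Classical.epsilon (· ∈ U ∩ s acc)
  refine ⟨fun h U => f (replay f h) U, fun U hU => ?_⟩
  set b : ℕ → X := fun n => f (replay f (hist U n)) (U n)
  have hb : ∀ n, b n ∈ U n ∩ s (hist b n) := fun n => by
    rw [← replay_hist]
    exact Classical.epsilon_spec ((hs_dense _).inter_open_nonempty (U n) (hU n).1 (hU n).2)
  exact ⟨fun n => (hb n).1, hs_win b fun n => (hb n).2⟩

theorem iiWinsGruCluster_of_iiWinsCL (h : IIWinsCL X x) : IIWinsGruCluster X x := by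
  obtain ⟨σ, hσ⟩ := h
  refine ⟨σ, fun U hU => ?_⟩
  obtain ⟨hmem, hcl⟩ := hσ U fun n => ⟨(hU n).1, x, (hU n).2⟩
  refine ⟨hmem, fun hclust => hcl ?_⟩
  exact closure_mono (image_subset_range _ _)
    (mapClusterPt_atTop_iff_forall_mem_closure.1 hclust 0)

end ClosureGame

namespace GruCluster

variable {X : Type*} [TopologicalSpace X] (x : X) (σ : List (Set X) → Set X → X)

def IsWinning : Prop :=
  ∀ U : ℕ → Set X, (∀ n, IsOpen (U n) ∧ x ∈ U n) →
    (∀ n, σ (hist U n) (U n) ∈ U n) ∧ ¬ MapClusterPt x atTop (fun n => σ (hist U n) (U n))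

/-- How often I repeats `V` after the play `t` before `σ` answers a point `p` with `x ∉ cl {p}`;
such a repetition exists when `σ` is winning (`IsWinning.exists_not_specializes`). -/
noncomputable def delay (t : List (Set X)) (V : Set X) : ℕ :=
  Classical.epsilon fun k => ¬ σ (t ++ List.replicate k V) V ⤳ x

noncomputable def reply (t : List (Set X)) (V : Set X) : X :=
  σ (t ++ List.replicate (delay x σ t V) V) V

open Classical in
/-- A move `V` that `reply` turns into `y`; the fallback `univ` keeps simulated plays legal. -/
noncomputable def moveFor (t : List (Set X)) (y : X) : Set X :=
  if h : ∃ V, (IsOpen V ∧ x ∈ V) ∧ reply x σ t V = y then h.choose else univ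

noncomputable def extend (t : List (Set X)) (y : X) : List (Set X) :=
  t ++ List.replicate (delay x σ t (moveFor x σ t y) + 1) (moveFor x σ t y)

/-- The play of the clustering game that I's strategy in `G1(Ω_{X,x}, Ω_{X,x})` keeps in mind
while II chooses the points `h`. -/
noncomputable def simulate (h : List X) : List (Set X) :=
  h.foldl (extend x σ) []

noncomputable def iStrategy (h : List X) : Set X :=
  reply x σ (simulate x σ h) '' {V | IsOpen V ∧ x ∈ V}

variable {x σ}

lemma moveFor_isOpen_mem (t : List (Set X)) (y : X) :
    IsOpen (moveFor x σ t y) ∧ x ∈ moveFor x σ t y := by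
  unfold moveFor
  split_ifs with h
  exacts [h.choose_spec.1, ⟨isOpen_univ, mem_univ x⟩]

lemma reply_moveFor {t : List (Set X)} {y : X}
    (hy : y ∈ reply x σ t '' {V | IsOpen V ∧ x ∈ V}) : reply x σ t (moveFor x σ t y) = y := by
  have hy' : ∃ V, (IsOpen V ∧ x ∈ V) ∧ reply x σ t V = y := hy
  rw [moveFor, dif_pos hy']
  exact hy'.choose_spec.2

lemma extend_isOpen_mem {t : List (Set X)} (ht : ∀ V ∈ t, IsOpen V ∧ x ∈ V) (y : X) :
    ∀ V ∈ extend x σ t y, IsOpen V ∧ x ∈ V := by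
  intro V hV
  rcases List.mem_append.1 hV with hV | hV
  exacts [ht V hV, List.eq_of_mem_replicate hV ▸ moveFor_isOpen_mem t y]

lemma simulate_isOpen_mem (h : List X) : ∀ V ∈ simulate x σ h, IsOpen V ∧ x ∈ V := by
  suffices ∀ t : List (Set X), (∀ V ∈ t, IsOpen V ∧ x ∈ V) →
      ∀ V ∈ h.foldl (extend x σ) t, IsOpen V ∧ x ∈ V from this [] (by simp)
  induction h with
  | nil => exact fun t ht => ht
  | cons y h ih => exact fun t ht => ih _ (extend_isOpen_mem ht y)

lemma simulate_hist_succ (b : ℕ → X) (n : ℕ) :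
    simulate x σ (hist b (n + 1)) = extend x σ (simulate x σ (hist b n)) (b n) := by
  rw [simulate, hist_succ, List.foldl_concat]
  rfl

lemma getD_isOpen_mem {t : List (Set X)} (ht : ∀ V ∈ t, IsOpen V ∧ x ∈ V) {V : Set X}
    (hV : IsOpen V) (hxV : x ∈ V) (m : ℕ) : IsOpen (t.getD m V) ∧ x ∈ t.getD m V := by
  rcases lt_or_ge m t.length with hm | hm
  · rw [List.getD_eq_getElem t V hm]
    exact ht _ (List.getElem_mem hm)
  · rw [List.getD_eq_default t V hm]
    exact ⟨hV, hxV⟩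

lemma le_length_simulate_hist (b : ℕ → X) (n : ℕ) : n ≤ (simulate x σ (hist b n)).length := by
  induction n with
  | zero => exact Nat.zero_le _
  | succ n ih =>
    rw [simulate_hist_succ, extend, List.length_append, List.length_replicate]
    omega

namespace IsWinning

variable {t : List (Set X)} {V : Set X}

lemma replicate_mem_and_not_mapClusterPt (hσ : IsWinning x σ) (ht : ∀ V ∈ t, IsOpen V ∧ x ∈ V)
    (hV : IsOpen V) (hxV : x ∈ V) : (∀ k, σ (t ++ List.replicate k V) V ∈ V) ∧
      ¬ MapClusterPt x atTop (fun k => σ (t ++ List.replicate k V) V) := by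
  obtain ⟨hmem, hclust⟩ := hσ (fun m => t.getD m V) (getD_isOpen_mem ht hV hxV)
  have hplay : ∀ k, hist (fun m => t.getD m V) (t.length + k) = t ++ List.replicate k V ∧
      t.getD (t.length + k) V = V :=
    fun k => ⟨hist_getD_length_add t V k, List.getD_eq_default t V (by omega)⟩
  refine ⟨fun k => by simpa only [hplay] using hmem (t.length + k), fun h => hclust ?_⟩
  refine MapClusterPt.of_comp
    (tendsto_atTop_mono (fun k => Nat.le_add_left k t.length) tendsto_id) ?_
  simpa only [Function.comp_def, hplay] using h

lemma exists_not_specializes (hσ : IsWinning x σ) (ht : ∀ V ∈ t, IsOpen V ∧ x ∈ V)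
    (hV : IsOpen V) (hxV : x ∈ V) : ∃ k, ¬ σ (t ++ List.replicate k V) V ⤳ x := by
  by_contra! h
  exact (hσ.replicate_mem_and_not_mapClusterPt ht hV hxV).2
    (mapClusterPt_of_eventually_specializes (Eventually.of_forall h))

lemma reply_mem (hσ : IsWinning x σ) (ht : ∀ V ∈ t, IsOpen V ∧ x ∈ V) (hV : IsOpen V)
    (hxV : x ∈ V) : reply x σ t V ∈ V :=
  (hσ.replicate_mem_and_not_mapClusterPt ht hV hxV).1 _

lemma not_reply_specializes (hσ : IsWinning x σ) (ht : ∀ V ∈ t, IsOpen V ∧ x ∈ V)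
    (hV : IsOpen V) (hxV : x ∈ V) : ¬ reply x σ t V ⤳ x :=
  Classical.epsilon_spec (hσ.exists_not_specializes ht hV hxV)

lemma mem_closure_iStrategy (hσ : IsWinning x σ) (h : List X) : x ∈ closure (iStrategy x σ h) :=
  mem_closure_iff.2 fun V hV hxV =>
    ⟨_, hσ.reply_mem (simulate_isOpen_mem h) hV hxV, V, ⟨hV, hxV⟩, rfl⟩

lemma not_mem_closure_of_forall_mem_iStrategy (hσ : IsWinning x σ) {b : ℕ → X}
    (hb : ∀ n, b n ∈ iStrategy x σ (hist b n)) : x ∉ closure (range b) := by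
  set t : ℕ → List (Set X) := fun n => simulate x σ (hist b n)
  set V : ℕ → Set X := fun n => moveFor x σ (t n) (b n)
  set k : ℕ → ℕ := fun n => delay x σ (t n) (V n)
  have hreply : ∀ n, reply x σ (t n) (V n) = b n := fun n => reply_moveFor (hb n)
  have ht_succ : ∀ n, t (n + 1) = t n ++ List.replicate (k n + 1) (V n) :=
    simulate_hist_succ b
  have hlen : ∀ n, n ≤ (t n).length := le_length_simulate_hist b
  obtain ⟨W, hW⟩ := exists_hist_eq_of_prefix (fun n => ht_succ n ▸ List.prefix_append _ _) hlen
  have hW_legal : ∀ m, IsOpen (W m) ∧ x ∈ W m := fun m =>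
    simulate_isOpen_mem _ _ (apply_mem_of_hist_eq (hW (m + 1)) (hlen (m + 1)))
  have hplay : ∀ n, σ (hist W ((t n).length + k n)) (W ((t n).length + k n)) = b n := by
    intro n
    have := hW (n + 1)
    rw [ht_succ, List.length_append, List.length_replicate, ← add_assoc, List.replicate_succ',
      ← List.append_assoc, hist_succ_eq_append_singleton_iff] at this
    rw [this.1, this.2, ← hreply]
    rfl
  refine fun hx => (hσ W hW_legal).2 (MapClusterPt.of_comp (φ := fun n => (t n).length + k n)
    (tendsto_atTop_mono (fun n => (hlen n).trans (Nat.le_add_right _ _)) tendsto_id) ?_)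
  simp only [Function.comp_def, hplay]
  refine mapClusterPt_of_mem_closure_range hx fun n => hreply n ▸ ?_
  exact hσ.not_reply_specializes (simulate_isOpen_mem _) (moveFor_isOpen_mem _ _).1
    (moveFor_isOpen_mem _ _).2

end IsWinning

end GruCluster

theorem iWinsG1_of_iiWinsGruCluster {X : Type*} [TopologicalSpace X] {x : X}
    (h : IIWinsGruCluster X x) : IWinsG1 {A : Set X | x ∈ closure A} {A : Set X | x ∈ closure A} :=
  let ⟨σ, hσ⟩ := h
  ⟨GruCluster.iStrategy x σ, GruCluster.IsWinning.mem_closure_iStrategy hσ,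
    fun _ hb => GruCluster.IsWinning.not_mem_closure_of_forall_mem_iStrategy hσ hb⟩

/-- For a topological space `X` and `x ∈ X`, each of the following
implies the next: (a) I has a winning strategy in `G1(D_X, Ω_{X,x})`;
(b) II has a winning strategy in the closure game `CL(X,x)`;
(c) II has a winning strategy in Gruenhage's clustering game at `x`;
(d) I has a winning strategy in `G1(Ω_{X,x}, Ω_{X,x})`. -/
theorem point_picking_implication_chain
    (X : Type*) [TopologicalSpace X] (x : X) :
    (IWinsG1 {D : Set X | Dense D} {A : Set X | x ∈ closure A} → IIWinsCL X x) ∧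
    (IIWinsCL X x → IIWinsGruCluster X x) ∧
    (IIWinsGruCluster X x →
      IWinsG1 {A : Set X | x ∈ closure A} {A : Set X | x ∈ closure A}) :=
  ⟨iiWinsCL_of_iWinsG1_dense, iiWinsGruCluster_of_iiWinsCL, iWinsG1_of_iiWinsGruCluster⟩
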